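/- Let p be a prime, n ≥ 1 an integer, and ψ : F_p → ℂˣ a nontrivial additive character. Let χ₁, χ₂ : F_{p^n}ˣ → ℂˣ be regular multiplicative characters with G(χ₁, ψ) = G(χ₂, ψ). Then the Gauss sums of the inverse characters are also equal: G(χ₁⁻¹, ψ) = G(χ₂⁻¹, ψ). -/

import Mathlib

/-! Complex conjugation gives `conj G(χ, ψ) = G(χ⁻¹, ψ⁻¹)`, so it suffices to show
`G(χ₁, ψ⁻¹) = G(χ₂, ψ⁻¹)`. With `m = |Eˣ|`, every term `χ(x) ψ(Tr x)` is an `N`-th root of unity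
for `N = (m + 1) m`, and raising it to the power `c = 2m + 1` fixes `χ(x)` and inverts `ψ(Tr x)`,
which turns `G(χ, ψ)` into `G(χ, ψ⁻¹)`. As `c` is prime to `N`, this power map on `N`-th roots
of unity is the restriction of an automorphism of `ℚ(ζ_N)`, so it respects equalities between
sums of such roots. -/

open scoped Classical

/-- The Gauss sum over `E` of the multiplicative character `χ` with respect to the
additive character `ψ` of the base field `F` (composed with the trace map):
`G(χ, ψ) = ∑_{x ∈ Eˣ} χ(x) ψ(Tr(x))`. -/
noncomputable def gaussSumE (F : Type) {E : Type} [Field F] [Field E] [Fintype F]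
    [Fintype E] [Algebra F E] (χ : Eˣ →* ℂˣ) (ψ : AddChar F ℂ) : ℂ :=
  ∑ x : Eˣ, (χ x : ℂ) * ψ (Algebra.trace F E (x : E))

/-- A multiplicative character `χ` of `Eˣ` is *regular* if it does not factor through
the norm map to any proper subfield of `E`. -/
def IsRegularChar {E : Type} [Field E] [Fintype E] (χ : Eˣ →* ℂˣ) : Prop :=
  ∀ K : Subfield E, K ≠ ⊤ →
    ¬ ∃ η : Kˣ →* ℂˣ, ∀ x : Eˣ, χ x = η (Units.map (Algebra.norm K : E →* K) x)

open IntermediateField in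
theorem IsPrimitiveRoot.exists_algEquiv_adjoin_apply_eq_pow {L : Type*} [Field L] [CharZero L]
    {N : ℕ} [NeZero N] {ζ : L} (hζ : IsPrimitiveRoot ζ N) {c : ℕ} (hc : c.Coprime N) :
    ∃ σ : Gal(ℚ⟮ζ⟯/ℚ), ∀ x : ℚ⟮ζ⟯, x ^ N = 1 → σ x = x ^ c := by
  have : IsCyclotomicExtension {N} ℚ ℚ⟮ζ⟯ := by
    change IsCyclotomicExtension {N} ℚ ℚ⟮ζ⟯.toSubalgebra
    rw [adjoin_simple_toSubalgebra_of_isAlgebraic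
      (hζ.isIntegral (NeZero.pos N)).tower_top.isAlgebraic]
    exact hζ.adjoin_isCyclotomicExtension ℚ
  have : NumberField ℚ⟮ζ⟯ := IsCyclotomicExtension.numberField {N} ℚ ℚ⟮ζ⟯
  refine ⟨(IsCyclotomicExtension.Rat.galEquivZMod N ℚ⟮ζ⟯).symm (ZMod.unitOfCoprime c hc),
    fun x hx => ?_⟩
  rw [IsCyclotomicExtension.Rat.galEquivZMod_apply_of_pow_eq N _ _ hx, MulEquiv.apply_symm_apply,
    ZMod.coe_unitOfCoprime, ZMod.val_natCast, ← pow_eq_pow_mod c hx]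

open IntermediateField in
theorem IsPrimitiveRoot.sum_pow_eq_sum_pow_of_sum_eq {L : Type*} [Field L] [CharZero L]
    {N : ℕ} [NeZero N] {ζ : L} (hζ : IsPrimitiveRoot ζ N) {c : ℕ} (hc : c.Coprime N)
    {ι : Type*} [Fintype ι] {f g : ι → L}
    (hf : ∀ i, f i ^ N = 1) (hg : ∀ i, g i ^ N = 1) (h : ∑ i, f i = ∑ i, g i) :
    ∑ i, f i ^ c = ∑ i, g i ^ c := by
  obtain ⟨σ, hσ⟩ := hζ.exists_algEquiv_adjoin_apply_eq_pow hc
  have mem : ∀ ω : L, ω ^ N = 1 → ω ∈ ℚ⟮ζ⟯ := fun ω hω => by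
    obtain ⟨k, -, rfl⟩ := hζ.eq_pow_of_pow_eq_one hω
    exact pow_mem (mem_adjoin_simple_self ℚ ζ) k
  have hσ_sum : ∀ f : ι → L, (hf : ∀ i, f i ^ N = 1) →
      ∑ i, f i ^ c = σ ⟨∑ i, f i, sum_mem fun i _ => mem _ (hf i)⟩ := fun f hf => by
    have hlift : (⟨∑ i, f i, sum_mem fun i _ => mem _ (hf i)⟩ : ℚ⟮ζ⟯) =
        ∑ i, ⟨f i, mem _ (hf i)⟩ := by
      ext; simp
    rw [hlift, map_sum]
    push_cast
    refine Finset.sum_congr rfl fun i _ => ?_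
    rw [hσ _ (Subtype.ext (by simpa using hf i))]
    rfl
  rw [hσ_sum f hf, hσ_sum g hg]
  simp_rw [h]

section GaussSum

variable {F E : Type} [Field F] [Fintype F] [Field E] [Fintype E] [Algebra F E]

theorem conj_gaussSumE (χ : Eˣ →* ℂˣ) (ψ : AddChar F ℂ) :
    starRingEnd ℂ (gaussSumE F χ ψ) = gaussSumE F χ⁻¹ ψ⁻¹ := by
  rw [gaussSumE, gaussSumE, map_sum]
  refine Fintype.sum_congr _ _ fun x => ?_
  have hχ : ‖(χ x : ℂ)‖ = 1 := Complex.norm_eq_one_of_pow_eq_one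
    (by rw [← Units.val_pow_eq_pow_val, ← map_pow, pow_card_eq_one, map_one, Units.val_one])
    Fintype.card_ne_zero
  rw [map_mul, AddChar.starComp_apply (Nat.pos_of_ne_zero (CharP.ringChar_ne_zero_of_finite F)),
    MonoidHom.inv_apply, Units.val_inv_eq_inv_val, Complex.inv_eq_conj hχ]

omit [Fintype F] in
theorem cast_card_units_add_one_eq_zero : (Fintype.card Eˣ : F) + 1 = 0 := by
  have hE : Fintype.card Eˣ + 1 = Fintype.card E := by
    rw [Fintype.card_units]; have := Fintype.card_pos (α := E); omega
  exact_mod_cast (algebraMap F E).injective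
    (by rw [hE, map_natCast, FiniteField.cast_card_eq_zero, map_zero])

theorem gaussSumE_inv_addChar_eq_sum_pow (χ : Eˣ →* ℂˣ) (ψ : AddChar F ℂ) :
    gaussSumE F χ ψ⁻¹ =
      ∑ x : Eˣ, ((χ x : ℂ) * ψ (Algebra.trace F E (x : E))) ^ (2 * Fintype.card Eˣ + 1) := by
  refine Fintype.sum_congr _ _ fun x => ?_
  have hχ : χ x ^ (2 * Fintype.card Eˣ + 1) = χ x := by
    rw [← map_pow, pow_succ, pow_mul', pow_card_eq_one, one_pow, one_mul]
  have hψ : ∀ t : F, ψ t ^ (2 * Fintype.card Eˣ + 1) = ψ⁻¹ t := fun t => by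
    rw [← AddChar.map_nsmul_eq_pow, AddChar.inv_apply, nsmul_eq_mul]
    congr 1
    push_cast
    linear_combination (2 * t) * cast_card_units_add_one_eq_zero (F := F) (E := E)
  rw [mul_pow, ← Units.val_pow_eq_pow_val, hχ, hψ]

theorem gaussSumE_inv_addChar_eq_of_eq {χ₁ χ₂ : Eˣ →* ℂˣ} {ψ : AddChar F ℂ}
    (h : gaussSumE F χ₁ ψ = gaussSumE F χ₂ ψ) : gaussSumE F χ₁ ψ⁻¹ = gaussSumE F χ₂ ψ⁻¹ := by
  set m := Fintype.card Eˣ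
  have hN : (m + 1) * m ≠ 0 := Nat.mul_ne_zero (Nat.succ_ne_zero m) Fintype.card_ne_zero
  have : NeZero ((m + 1) * m) := ⟨hN⟩
  -- `c = 2m + 1` satisfies `c ^ 2 ≡ 1 [MOD (m + 1) * m]`
  have hc : (2 * m + 1).Coprime ((m + 1) * m) :=
    Nat.isCoprime_iff_coprime.mp ⟨2 * m + 1, -4, by push_cast; ring⟩
  have hχ : ∀ (χ : Eˣ →* ℂˣ) x, (χ x : ℂ) ^ m = 1 := fun χ x => by
    rw [← Units.val_pow_eq_pow_val, ← map_pow, pow_card_eq_one, map_one, Units.val_one]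
  have hψ : ∀ t, ψ t ^ (m + 1) = 1 := fun t => by
    rw [← AddChar.map_nsmul_eq_pow, nsmul_eq_mul]
    push_cast
    rw [cast_card_units_add_one_eq_zero, zero_mul, AddChar.map_zero_eq_one]
  have hroot : ∀ (χ : Eˣ →* ℂˣ) (x : Eˣ),
      ((χ x : ℂ) * ψ (Algebra.trace F E (x : E))) ^ ((m + 1) * m) = 1 := fun χ x => by
    rw [mul_pow, pow_mul' (χ x : ℂ), pow_mul (ψ _), hχ, hψ, one_pow, one_pow, one_mul]
  rw [gaussSumE_inv_addChar_eq_sum_pow, gaussSumE_inv_addChar_eq_sum_pow]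
  exact (Complex.isPrimitiveRoot_exp _ hN).sum_pow_eq_sum_pow_of_sum_eq hc
    (hroot χ₁) (hroot χ₂) h

end GaussSum

theorem gauss_sum_inv_eq_of_gauss_sum_eq_general
    (p : ℕ) [hp : Fact p.Prime]
    (E : Type) [Field E] [Fintype E] [Algebra (ZMod p) E]
    (ψ : AddChar (ZMod p) ℂ)
    (χ₁ χ₂ : Eˣ →* ℂˣ)
    (h : gaussSumE (ZMod p) χ₁ ψ = gaussSumE (ZMod p) χ₂ ψ) :
    gaussSumE (ZMod p) χ₁⁻¹ ψ = gaussSumE (ZMod p) χ₂⁻¹ ψ := by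
  rw [← inv_inv ψ, ← conj_gaussSumE, ← conj_gaussSumE, gaussSumE_inv_addChar_eq_of_eq h]

theorem gauss_sum_inv_eq_of_gauss_sum_eq
    (p n : ℕ) [hp : Fact p.Prime] (hn : 1 ≤ n)
    (E : Type) [Field E] [Fintype E] [Algebra (ZMod p) E]
    (hE : Fintype.card E = p ^ n)
    (ψ : AddChar (ZMod p) ℂ) (hψ : ψ ≠ 1)
    (χ₁ χ₂ : Eˣ →* ℂˣ) (hχ₁ : IsRegularChar χ₁) (hχ₂ : IsRegularChar χ₂)
    (h : gaussSumE (ZMod p) χ₁ ψ = gaussSumE (ZMod p) χ₂ ψ) :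
    gaussSumE (ZMod p) χ₁⁻¹ ψ = gaussSumE (ZMod p) χ₂⁻¹ ψ :=
  gauss_sum_inv_eq_of_gauss_sum_eq_general p (hp := hp) E ψ χ₁ χ₂ h
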